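/- Let (G,σ) be a signed simple graph with a unique Sachs subgraph. If G has a perfect matching, then the spectrum of (G,σ) splits about the origin: exactly half of the eigenvalues of its adjacency matrix are positive and half are negative. -/

import Mathlib

open scoped Classical

/-- Degree of a vertex in a simple graph (as a cardinality, avoiding decidability). -/
noncomputable def ndeg {V : Type*} (H : SimpleGraph V) (v : V) : ℕ :=
  Nat.card {w // H.Adj v w}

/-- `H` is a Sachs subgraph of the simple graph `G`: a spanning subgraph all of whose
components are `K₂`'s or cycles. -/
def IsSachsSubgraph {V : Type*} (G H : SimpleGraph V) : Prop :=
  H ≤ G ∧ (∀ v, ndeg H v = 1 ∨ ndeg H v = 2) ∧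
    ∀ u v, H.Adj u v → ¬(ndeg H u = 1 ∧ ndeg H v = 2)

/-- `M` is a perfect matching of `G`, as a spanning subgraph of `K₂` components. -/
def IsPerfectMatchingSub {V : Type*} (G M : SimpleGraph V) : Prop :=
  M ≤ G ∧ ∀ v, ndeg M v = 1

/-!
Let `τ` be the involution of the perfect matching `M` and `B` the part of `A` supported on `M`.
In the Leibniz expansion of `det (B + t • (A - B))` a permutation with only nonzero terms traces
a Sachs subgraph of `G`, which by uniqueness is `M`; so that permutation is `τ` and the
determinant never vanishes. The numbers of positive and of negative eigenvalues are the maximal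
dimensions of subspaces on which the quadratic form is positive, resp. negative, definite; both
can only grow under small perturbations and their sum stays the dimension, so they are constant
along the segment from `B` to `A`. Finally `B * B = 1` and `trace B = 0`, so the eigenvalues of
`B` are `±1` and exactly half of them are positive.
-/

open Matrix Topology

section SumOfSquares

variable {ι V : Type*} [Fintype ι] [AddCommGroup V] [Module ℝ V]

theorem finrank_le_card_pos_of_sum_sq (ℓ : V →ₗ[ℝ] ι → ℝ) (μ : ι → ℝ) {W : Submodule ℝ V}
    (hW : ∀ x ∈ W, x ≠ 0 → 0 < ∑ i, μ i * ℓ x i ^ 2) :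
    Module.finrank ℝ W ≤ Nat.card {i // 0 < μ i} := by
  let restrict : W →ₗ[ℝ] {i // 0 < μ i} → ℝ :=
    LinearMap.funLeft ℝ ℝ Subtype.val ∘ₗ ℓ ∘ₗ W.subtype
  have hinj : Function.Injective restrict := by
    rw [← LinearMap.ker_eq_bot, LinearMap.ker_eq_bot']
    intro x hx
    by_contra hne
    have hpos := hW x x.2 (by simpa using hne)
    have hnonpos : ∑ i, μ i * ℓ x i ^ 2 ≤ 0 := Finset.sum_nonpos fun i _ => by
      by_cases hi : 0 < μ i
      · have hxi : ℓ x i = 0 := congrFun hx ⟨i, hi⟩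
        simp [hxi]
      · exact mul_nonpos_of_nonpos_of_nonneg (not_lt.1 hi) (sq_nonneg _)
    linarith
  calc Module.finrank ℝ W ≤ Module.finrank ℝ ({i // 0 < μ i} → ℝ) :=
        LinearMap.finrank_le_finrank_of_injective hinj
    _ = Nat.card {i // 0 < μ i} := by simp [Nat.card_eq_fintype_card]

theorem exists_finrank_eq_card_pos_of_sum_sq (ℓ : V ≃ₗ[ℝ] ι → ℝ) (μ : ι → ℝ) :
    ∃ W : Submodule ℝ V, (∀ x ∈ W, x ≠ 0 → 0 < ∑ i, μ i * ℓ x i ^ 2) ∧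
      Module.finrank ℝ W = Nat.card {i // 0 < μ i} := by
  let embed : ({i // 0 < μ i} → ℝ) →ₗ[ℝ] V :=
    ℓ.symm.toLinearMap ∘ₗ Function.ExtendByZero.linearMap ℝ Subtype.val
  have hinj : Function.Injective embed :=
    ℓ.symm.injective.comp (Function.extend_injective Subtype.val_injective (0 : ι → ℝ))
  refine ⟨LinearMap.range embed, ?_, ?_⟩
  · rintro _ ⟨c, rfl⟩ hne
    set y := Function.extend Subtype.val c (0 : ι → ℝ)
    have hℓ : ℓ (embed c) = y := ℓ.apply_symm_apply y
    have hvanish : ∀ i, ¬ 0 < μ i → y i = 0 := fun i hi =>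
      Function.extend_apply' _ _ _ (by rintro ⟨j, rfl⟩; exact hi j.2)
    obtain ⟨i, hi⟩ : ∃ i, y i ≠ 0 := by
      by_contra! h
      exact hne (by rw [← ℓ.symm_apply_apply (embed c), hℓ, funext h]; exact map_zero _)
    have hμi : 0 < μ i := by by_contra h; exact hi (hvanish i h)
    rw [hℓ]
    refine Finset.sum_pos' (fun j _ => ?_) ⟨i, Finset.mem_univ _, by positivity⟩
    by_cases hj : 0 < μ j
    · positivity
    · simp [hvanish j hj]
  · rw [LinearMap.finrank_range_of_inj hinj]
    simp [Nat.card_eq_fintype_card]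

theorem card_pos_eq_card_neg_of_sum_eq_zero {μ : ι → ℝ}
    (hμ : ∀ i, μ i = 1 ∨ μ i = -1) (hsum : ∑ i, μ i = 0) :
    Nat.card {i // 0 < μ i} = Nat.card {i // μ i < 0} := by
  have hsum' : ∑ i, μ i = (Nat.card {i // 0 < μ i} : ℝ) - Nat.card {i // μ i < 0} := by
    have hneg : ∀ i, μ i < 0 ↔ ¬ 0 < μ i := fun i => by rcases hμ i with h | h <;> simp [h]
    simp only [Nat.card_eq_fintype_card, Fintype.card_subtype, hneg]
    have hμ' : ∀ i, μ i = if 0 < μ i then 1 else -1 := fun i => by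
      rcases hμ i with h | h <;> simp [h]
    rw [Finset.sum_congr rfl fun i _ => hμ' i, Finset.sum_ite]
    simp [sub_eq_add_neg]
  rw [hsum] at hsum'
  exact_mod_cast (sub_eq_zero.1 hsum'.symm)

end SumOfSquares

section Inertia

variable {n : Type*} [Fintype n]

def Matrix.PosDefOn (X : Matrix n n ℝ) (W : Submodule ℝ (n → ℝ)) : Prop :=
  ∀ x ∈ W, x ≠ 0 → 0 < x ⬝ᵥ X *ᵥ x

theorem Matrix.isOpen_setOf_posDefOn (W : Submodule ℝ (n → ℝ)) :
    IsOpen {X : Matrix n n ℝ | X.PosDefOn W} := by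
  rw [isOpen_iff_eventually]
  intro X₀ hX₀
  have hK : IsCompact (Metric.sphere (0 : n → ℝ) 1 ∩ W) :=
    (isCompact_sphere 0 1).inter_right W.closed_of_finiteDimensional
  have hQ : Continuous fun p : Matrix n n ℝ × (n → ℝ) => p.2 ⬝ᵥ p.1 *ᵥ p.2 := by fun_prop
  have hnear : ∀ᶠ X in 𝓝 X₀, ∀ y ∈ Metric.sphere (0 : n → ℝ) 1 ∩ W, 0 < y ⬝ᵥ X *ᵥ y :=
    hK.eventually_forall_of_forall_eventually fun y hy =>
      continuousAt_const.eventually_lt hQ.continuousAt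
        (hX₀ y hy.2 (ne_zero_of_mem_sphere one_ne_zero ⟨y, hy.1⟩))
  filter_upwards [hnear] with X hX x hxW hx
  have hx' : 0 < ‖x‖ := norm_pos_iff.2 hx
  have hunit := hX (‖x‖⁻¹ • x) ⟨by simp [norm_smul, hx'.ne'], W.smul_mem _ hxW⟩
  rw [mulVec_smul, dotProduct_smul, smul_dotProduct, smul_eq_mul, smul_eq_mul] at hunit
  exact pos_of_mul_pos_right (pos_of_mul_pos_right hunit (by positivity)) (by positivity)

variable [DecidableEq n]

theorem Matrix.IsHermitian.dotProduct_mulVec_self_eq_sum {X : Matrix n n ℝ} (hX : X.IsHermitian)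
    (x : n → ℝ) :
    x ⬝ᵥ X *ᵥ x = ∑ i, hX.eigenvalues i *
      UnitaryGroup.toLinearEquiv (star hX.eigenvectorUnitary) x i ^ 2 := by
  set U : Matrix n n ℝ := (hX.eigenvectorUnitary : Matrix n n ℝ)
  have hX' : X = U * diagonal hX.eigenvalues * Uᵀ := by
    conv_lhs => rw [hX.spectral_theorem]
    simp [U, star_eq_conjTranspose, conjTranspose_eq_transpose_of_trivial]
  have hy : UnitaryGroup.toLinearEquiv (star hX.eigenvectorUnitary) x = Uᵀ *ᵥ x := by
    rfl
  rw [hy]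
  conv_lhs => rw [hX', ← mulVec_mulVec, ← mulVec_mulVec, dotProduct_mulVec, ← mulVec_transpose]
  simp only [dotProduct, mulVec_diagonal]
  exact Finset.sum_congr rfl fun i _ => by ring

theorem Matrix.IsHermitian.finrank_le_card_pos_of_posDefOn {X : Matrix n n ℝ}
    (hX : X.IsHermitian) {W : Submodule ℝ (n → ℝ)} (hW : X.PosDefOn W) :
    Module.finrank ℝ W ≤ Nat.card {i // 0 < hX.eigenvalues i} :=
  finrank_le_card_pos_of_sum_sq _ _ fun x hx h0 => hX.dotProduct_mulVec_self_eq_sum x ▸ hW x hx h0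

theorem Matrix.IsHermitian.exists_posDefOn_finrank_eq_card_pos {X : Matrix n n ℝ}
    (hX : X.IsHermitian) :
    ∃ W, X.PosDefOn W ∧ Module.finrank ℝ W = Nat.card {i // 0 < hX.eigenvalues i} := by
  simpa only [Matrix.PosDefOn, ← hX.dotProduct_mulVec_self_eq_sum] using
    exists_finrank_eq_card_pos_of_sum_sq
      (UnitaryGroup.toLinearEquiv (star hX.eigenvectorUnitary)) hX.eigenvalues

theorem Matrix.IsHermitian.dotProduct_neg_mulVec_self_eq_sum {X : Matrix n n ℝ}
    (hX : X.IsHermitian) (x : n → ℝ) :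
    x ⬝ᵥ (-X) *ᵥ x = ∑ i, -hX.eigenvalues i *
      UnitaryGroup.toLinearEquiv (star hX.eigenvectorUnitary) x i ^ 2 := by
  simp only [neg_mulVec, dotProduct_neg, hX.dotProduct_mulVec_self_eq_sum, neg_mul,
    Finset.sum_neg_distrib]

theorem Matrix.IsHermitian.finrank_le_card_neg_of_posDefOn_neg {X : Matrix n n ℝ}
    (hX : X.IsHermitian) {W : Submodule ℝ (n → ℝ)} (hW : (-X).PosDefOn W) :
    Module.finrank ℝ W ≤ Nat.card {i // hX.eigenvalues i < 0} :=
  (finrank_le_card_pos_of_sum_sq _ _ fun x hx h0 =>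
    hX.dotProduct_neg_mulVec_self_eq_sum x ▸ hW x hx h0).trans_eq
    (Nat.card_congr (Equiv.subtypeEquivRight fun _ => neg_pos))

theorem Matrix.IsHermitian.exists_posDefOn_neg_finrank_eq_card_neg {X : Matrix n n ℝ}
    (hX : X.IsHermitian) :
    ∃ W, (-X).PosDefOn W ∧ Module.finrank ℝ W = Nat.card {i // hX.eigenvalues i < 0} := by
  obtain ⟨W, hW, hdim⟩ := exists_finrank_eq_card_pos_of_sum_sq
    (UnitaryGroup.toLinearEquiv (star hX.eigenvectorUnitary)) (-hX.eigenvalues)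
  refine ⟨W, fun x hx h0 => ?_,
    hdim.trans (Nat.card_congr (Equiv.subtypeEquivRight fun _ => neg_pos))⟩
  rw [hX.dotProduct_neg_mulVec_self_eq_sum]
  exact hW x hx h0

theorem Matrix.IsHermitian.card_pos_add_card_neg_eigenvalues {X : Matrix n n ℝ}
    (hX : X.IsHermitian) (hdet : X.det ≠ 0) :
    Nat.card {i // 0 < hX.eigenvalues i} + Nat.card {i // hX.eigenvalues i < 0} =
      Fintype.card n := by
  have hne : ∀ i, hX.eigenvalues i ≠ 0 := fun i h0 => hdet <| by
    rw [hX.det_eq_prod_eigenvalues]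
    exact Finset.prod_eq_zero (Finset.mem_univ i) (by simp [h0])
  have hneg : {i // hX.eigenvalues i < 0} = {i // ¬ 0 < hX.eigenvalues i} := by
    congr! 2 with i
    exact ⟨fun h => h.not_gt, fun h => (not_lt.1 h).lt_of_ne (hne i)⟩
  rw [hneg, Nat.card_eq_fintype_card, Nat.card_eq_fintype_card, Fintype.card_subtype_compl]
  have := Fintype.card_subtype_le fun i => 0 < hX.eigenvalues i
  omega

theorem card_eigenvalues_pos_neg_eq_of_continuous_of_det_ne_zero {T : Type*} [TopologicalSpace T]
    [PreconnectedSpace T] {X : T → Matrix n n ℝ} (hXc : Continuous X)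
    (hX : ∀ t, (X t).IsHermitian) (hdet : ∀ t, (X t).det ≠ 0) (a b : T) :
    Nat.card {i // 0 < (hX a).eigenvalues i} = Nat.card {i // 0 < (hX b).eigenvalues i} ∧
      Nat.card {i // (hX a).eigenvalues i < 0} = Nat.card {i // (hX b).eigenvalues i < 0} := by
  let inertia : T → ℕ × ℕ := fun t =>
    (Nat.card {i // 0 < (hX t).eigenvalues i}, Nat.card {i // (hX t).eigenvalues i < 0})
  have hpos : ∀ t₀, ∀ᶠ t in 𝓝 t₀, (inertia t₀).1 ≤ (inertia t).1 := fun t₀ => by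
    obtain ⟨W, hW, hdim⟩ := (hX t₀).exists_posDefOn_finrank_eq_card_pos
    filter_upwards [hXc.continuousAt.preimage_mem_nhds
      ((isOpen_setOf_posDefOn W).mem_nhds hW)] with t ht
    exact hdim.symm.trans_le ((hX t).finrank_le_card_pos_of_posDefOn ht)
  have hneg : ∀ t₀, ∀ᶠ t in 𝓝 t₀, (inertia t₀).2 ≤ (inertia t).2 := fun t₀ => by
    obtain ⟨W, hW, hdim⟩ := (hX t₀).exists_posDefOn_neg_finrank_eq_card_neg
    filter_upwards [hXc.neg.continuousAt.preimage_mem_nhds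
      ((isOpen_setOf_posDefOn W).mem_nhds hW)] with t ht
    exact hdim.symm.trans_le ((hX t).finrank_le_card_neg_of_posDefOn_neg ht)
  -- both counts are lower semicontinuous, and their sum is constant
  have hconst : IsLocallyConstant inertia :=
    (IsLocallyConstant.iff_eventually_eq _).2 fun t₀ => by
      filter_upwards [hpos t₀, hneg t₀] with t hp hn
      have hsum := (hX t).card_pos_add_card_neg_eigenvalues (hdet t)
      have hsum₀ := (hX t₀).card_pos_add_card_neg_eigenvalues (hdet t₀)
      simp only [inertia] at hp hn ⊢
      ext <;> simp only <;> omega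
  exact Prod.ext_iff.1 (hconst.apply_eq_of_preconnectedSpace a b)

theorem Matrix.IsHermitian.eigenvalues_eq_one_or_neg_one {X : Matrix n n ℝ} (hX : X.IsHermitian)
    (h : X * X = 1) (i : n) : hX.eigenvalues i = 1 ∨ hX.eigenvalues i = -1 := by
  set u : n → ℝ := ⇑(hX.eigenvectorBasis i)
  have hu : u ≠ 0 := fun h0 =>
    hX.eigenvectorBasis.orthonormal.ne_zero i (by ext j; exact congrFun h0 j)
  have hsq : (hX.eigenvalues i * hX.eigenvalues i) • u = (1 : ℝ) • u := by
    rw [one_smul, mul_smul, ← hX.mulVec_eigenvectorBasis, ← mulVec_smul,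
      ← hX.mulVec_eigenvectorBasis, mulVec_mulVec, h, one_mulVec]
  exact mul_self_eq_one_iff.1 (smul_left_injective ℝ hu hsq)

end Inertia

noncomputable def Matrix.restrictToGraph {V R : Type*} [Zero R] (A : Matrix V V R)
    (H : SimpleGraph V) : Matrix V V R :=
  of fun i j => if H.Adj i j then A i j else 0

section RestrictToGraph

variable {V R : Type*} (H : SimpleGraph V)

theorem Matrix.restrictToGraph_apply [Zero R] (A : Matrix V V R) (i j : V) :
    A.restrictToGraph H i j = if H.Adj i j then A i j else 0 :=
  rfl

theorem Matrix.IsHermitian.restrictToGraph [AddMonoid R] [StarAddMonoid R] {A : Matrix V V R}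
    (hA : A.IsHermitian) : (A.restrictToGraph H).IsHermitian := by
  ext i j
  simp only [conjTranspose_apply, restrictToGraph_apply, H.adj_comm j i]
  split_ifs <;> simp [hA.apply]

theorem Matrix.trace_restrictToGraph [Fintype V] [AddCommMonoid R] (A : Matrix V V R) :
    (A.restrictToGraph H).trace = 0 :=
  Finset.sum_eq_zero fun i _ => by simp [restrictToGraph_apply]

theorem Matrix.restrictToGraph_mul_self [Fintype V] [DecidableEq V] [NonAssocSemiring R]
    {A : Matrix V V R} {M : SimpleGraph V} {τ : Equiv.Perm V} (hτ : ∀ v w, M.Adj v w ↔ τ v = w)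
    (hA : ∀ v, A v (τ v) * A (τ v) v = 1) :
    A.restrictToGraph M * A.restrictToGraph M = 1 := by
  have hττ : ∀ v, τ (τ v) = v := fun v => (hτ _ _).1 ((M.adj_comm _ _).1 ((hτ v _).2 rfl))
  ext i j
  rw [mul_apply, Finset.sum_eq_single (τ i)]
  · by_cases hij : i = j
    · subst hij
      simp [restrictToGraph_apply, hτ, hττ, hA]
    · simp [restrictToGraph_apply, hτ, hττ, hij]
  · intro k _ hk
    simp [restrictToGraph_apply, hτ, Ne.symm hk]
  · simp

end RestrictToGraph

section Sachs

variable {V : Type*}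

theorem exists_perm_adj_iff_of_ndeg_eq_one {M : SimpleGraph V} (h : ∀ v, ndeg M v = 1) :
    ∃ τ : Equiv.Perm V, ∀ v w, M.Adj v w ↔ τ v = w := by
  have hpartner : ∀ v, ∃ w, M.Adj v w ∧ ∀ w', M.Adj v w' → w' = w := fun v => by
    obtain ⟨⟨w, hw⟩, huniq⟩ := Nat.card_eq_one_iff_exists.1 (h v)
    exact ⟨w, hw, fun w' hw' => congrArg Subtype.val (huniq ⟨w', hw'⟩)⟩
  choose p hp hpu using hpartner
  have hinv : Function.Involutive p := fun v => (hpu (p v) v (hp v).symm).symm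
  exact ⟨hinv.toPerm p, fun v w => ⟨fun hvw => (hpu v w hvw).symm, fun h => h ▸ hp v⟩⟩

theorem IsPerfectMatchingSub.isSachsSubgraph {G M : SimpleGraph V}
    (hM : IsPerfectMatchingSub G M) : IsSachsSubgraph G M :=
  ⟨hM.1, fun v => Or.inl (hM.2 v), fun _ v _ h => by simp [hM.2 v] at h⟩

theorem ndeg_fromRel_perm {π : Equiv.Perm V} (hπ : ∀ v, π v ≠ v) (v : V) :
    ndeg (SimpleGraph.fromRel fun u w => π u = w) v = if π (π v) = v then 1 else 2 := by
  have hnbhd : {w | (SimpleGraph.fromRel fun u w => π u = w).Adj v w} = {π v, π.symm v} := by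
    ext w
    simp only [SimpleGraph.fromRel_adj, Set.mem_ofPred_eq, Set.mem_insert_iff,
      Set.mem_singleton_iff, Equiv.eq_symm_apply]
    constructor
    · rintro ⟨-, h | h⟩
      · exact Or.inl h.symm
      · exact Or.inr h
    · rintro (rfl | rfl)
      · exact ⟨(hπ v).symm, Or.inl rfl⟩
      · exact ⟨hπ w, Or.inr rfl⟩
  rw [ndeg, ← Set.coe_ofPred, hnbhd, Nat.card_coe_set_eq]
  split_ifs with h
  · rw [show π.symm v = π v from π.symm_apply_eq.2 h.symm, Set.pair_eq_singleton,
      Set.ncard_singleton]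
  · exact Set.ncard_pair fun he => h (by rw [he, Equiv.apply_symm_apply])

theorem isSachsSubgraph_fromRel_perm {G : SimpleGraph V} {π : Equiv.Perm V}
    (hπ : ∀ v, G.Adj (π v) v) : IsSachsSubgraph G (SimpleGraph.fromRel fun u w => π u = w) := by
  have hfix : ∀ v, π v ≠ v := fun v => (hπ v).ne
  refine ⟨?_, fun v => ?_, ?_⟩
  · rintro u w ⟨-, rfl | rfl⟩
    · exact (hπ u).symm
    · exact hπ w
  · rw [ndeg_fromRel_perm hfix]
    split_ifs <;> simp
  · rintro u w ⟨-, huw⟩ ⟨hu, hw⟩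
    rw [ndeg_fromRel_perm hfix] at hu hw
    have h2u : π (π u) = u := by by_contra h; simp [h] at hu
    have h2w : π (π w) ≠ w := by intro h; simp [h] at hw
    rcases huw with rfl | rfl
    · exact h2w (congrArg π h2u)
    · exact h2w (π.injective h2u)

theorem eq_of_forall_adj_of_existsUnique_isSachsSubgraph {G M : SimpleGraph V}
    (huniq : ∃! S, IsSachsSubgraph G S) (hM : IsPerfectMatchingSub G M) {τ : Equiv.Perm V}
    (hτ : ∀ v w, M.Adj v w ↔ τ v = w) {π : Equiv.Perm V} (hπ : ∀ v, G.Adj (π v) v) :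
    π = τ := by
  have hπM : (SimpleGraph.fromRel fun u w => π u = w) = M :=
    huniq.unique (isSachsSubgraph_fromRel_perm hπ) hM.isSachsSubgraph
  ext v
  have hadj : M.Adj v (π v) := hπM ▸ ⟨(hπ v).ne', Or.inl rfl⟩
  exact ((hτ v (π v)).1 hadj).symm

variable [Fintype V] [DecidableEq V] {G M : SimpleGraph V}

theorem Matrix.det_eq_sign_smul_prod_of_unique {R : Type*} [CommRing R] (X : Matrix V V R)
    (τ : Equiv.Perm V) (hτ : ∀ π : Equiv.Perm V, (∀ i, X (π i) i ≠ 0) → π = τ) :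
    X.det = Equiv.Perm.sign τ • ∏ i, X (τ i) i := by
  rw [det_apply, Finset.sum_eq_single_of_mem τ (Finset.mem_univ τ)]
  intro π _ hπ
  obtain ⟨i, hi⟩ : ∃ i, X (π i) i = 0 := by
    by_contra! h
    exact hπ (hτ π h)
  rw [Finset.prod_eq_zero (f := fun j => X (π j) j) (Finset.mem_univ i) hi, smul_zero]

theorem det_ne_zero_of_existsUnique_isSachsSubgraph {R : Type*} [CommRing R] [IsDomain R]
    (huniq : ∃! S, IsSachsSubgraph G S) (hM : IsPerfectMatchingSub G M) {τ : Equiv.Perm V}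
    (hτ : ∀ v w, M.Adj v w ↔ τ v = w) (X : Matrix V V R) (hsupp : ∀ i j, ¬ G.Adj i j → X i j = 0)
    (hdiag : ∀ i, X (τ i) i ≠ 0) : X.det ≠ 0 := by
  rw [X.det_eq_sign_smul_prod_of_unique τ fun π hπ =>
    eq_of_forall_adj_of_existsUnique_isSachsSubgraph huniq hM hτ fun v =>
      by_contra fun h => hπ v (hsupp _ _ h)]
  exact (smul_ne_zero_iff_ne _).2 (Finset.prod_ne_zero_iff.2 fun i _ => hdiag i)

theorem spectrum_splits_of_existsUnique_isSachsSubgraph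
    (huniq : ∃! S, IsSachsSubgraph G S) (hM : IsPerfectMatchingSub G M) {A : Matrix V V ℝ}
    (hA : A.IsHermitian) (hsupp : ∀ i j, ¬ G.Adj i j → A i j = 0)
    (hsign : ∀ i j, M.Adj i j → A i j = 1 ∨ A i j = -1) :
    Nat.card {i // 0 < hA.eigenvalues i} = Fintype.card V / 2 ∧
      Nat.card {i // hA.eigenvalues i < 0} = Fintype.card V / 2 := by
  obtain ⟨τ, hτ⟩ := exists_perm_adj_iff_of_ndeg_eq_one hM.2
  set B := A.restrictToGraph M
  have hB : B.IsHermitian := hA.restrictToGraph M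
  let X : ℝ → Matrix V V ℝ := fun t => B + t • (A - B)
  have hX : ∀ t, (X t).IsHermitian := fun t => hB.add ((hA.sub hB).smul (IsSelfAdjoint.all t))
  have hdet : ∀ t, (X t).det ≠ 0 := by
    intro t
    refine det_ne_zero_of_existsUnique_isSachsSubgraph huniq hM hτ (X t)
      (fun i j hij => ?_) fun i => ?_
    · have hMij : ¬ M.Adj i j := fun h => hij (hM.1 h)
      simp [X, B, restrictToGraph_apply, hsupp i j hij, hMij]
    · have hMi : M.Adj (τ i) i := (M.adj_comm _ _).1 ((hτ i _).2 rfl)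
      rcases hsign _ _ hMi with h | h <;> simp [X, B, restrictToGraph_apply, hMi, h]
  have hX0 : X 0 = B := by simp [X]
  have hX1 : X 1 = A := by simp [X]
  obtain ⟨hpos, hneg⟩ := card_eigenvalues_pos_neg_eq_of_continuous_of_det_ne_zero
    (by fun_prop : Continuous X) hX hdet 0 1
  simp only [hX0, hX1] at hpos hneg
  have hBsq : B * B = 1 := restrictToGraph_mul_self hτ fun v => by
    have hMv : M.Adj v (τ v) := (hτ v _).2 rfl
    rw [← hA.apply, star_trivial]
    rcases hsign _ _ hMv.symm with h | h <;> simp [h]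
  have hBbal := card_pos_eq_card_neg_of_sum_eq_zero (hB.eigenvalues_eq_one_or_neg_one hBsq)
    (by simpa [B, trace_restrictToGraph] using hB.trace_eq_sum_eigenvalues.symm)
  have hsum := hA.card_pos_add_card_neg_eigenvalues (hX1 ▸ hdet 1)
  omega

end Sachs

theorem unique_sachs_perfect_matching_spectrum_splits_general
    {m : ℕ} (G : SimpleGraph (Fin (2 * m)))
    (huniq : ∃! S : SimpleGraph (Fin (2 * m)), IsSachsSubgraph G S)
    (M : SimpleGraph (Fin (2 * m))) (hM : IsPerfectMatchingSub G M)
    (σ : Fin (2 * m) → Fin (2 * m) → ℝ)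
    (hσval : ∀ i j, G.Adj i j → σ i j = 1 ∨ σ i j = -1)
    (A : Matrix (Fin (2 * m)) (Fin (2 * m)) ℝ)
    (hAdef : A = Matrix.of fun i j => if G.Adj i j then σ i j else 0)
    (hA : A.IsHermitian) :
    Nat.card {i // 0 < hA.eigenvalues i} = m ∧
    Nat.card {i // hA.eigenvalues i < 0} = m := by
  have hsupp : ∀ i j, ¬ G.Adj i j → A i j = 0 := fun i j h => by simp [hAdef, h]
  have hsign : ∀ i j, M.Adj i j → A i j = 1 ∨ A i j = -1 := fun i j h => by
    simpa [hAdef, hM.1 h] using hσval i j (hM.1 h)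
  simpa using spectrum_splits_of_existsUnique_isSachsSubgraph huniq hM hA hsupp hsign

/-- Let `(G,σ)` be a signed simple graph with a unique Sachs subgraph.
If `G` has a perfect matching, then the spectrum of `(G,σ)` splits about the origin:
exactly half of the eigenvalues of its adjacency matrix are positive and half are
negative. -/
theorem unique_sachs_perfect_matching_spectrum_splits
    {m : ℕ} (G : SimpleGraph (Fin (2 * m)))
    (huniq : ∃! S : SimpleGraph (Fin (2 * m)), IsSachsSubgraph G S)
    (M : SimpleGraph (Fin (2 * m))) (hM : IsPerfectMatchingSub G M)
    (σ : Fin (2 * m) → Fin (2 * m) → ℝ)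
    (hσsymm : ∀ i j, σ i j = σ j i)
    (hσval : ∀ i j, G.Adj i j → σ i j = 1 ∨ σ i j = -1)
    (A : Matrix (Fin (2 * m)) (Fin (2 * m)) ℝ)
    (hAdef : A = Matrix.of fun i j => if G.Adj i j then σ i j else 0)
    (hA : A.IsHermitian) :
    Nat.card {i // 0 < hA.eigenvalues i} = m ∧
    Nat.card {i // hA.eigenvalues i < 0} = m :=
  unique_sachs_perfect_matching_spectrum_splits_general G huniq M hM σ hσval A hAdef hA
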